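/- Let X₀, X₁ be n-dimensional Banach lattices on ℝⁿ and 0 < θ < 1. Then the dual lattice of the Calderón product X₀^{1-θ}X₁^{θ} equals (X₀')^{1-θ}(X₁')^{θ} isometrically. -/

import Mathlib

open Complex MeasureTheory Finset

noncomputable section

namespace Paper

/-- The closed unit strip in the complex plane. -/
def Strip : Set ℂ := {z : ℂ | 0 ≤ z.re ∧ z.re ≤ 1}

/-- The open unit strip in the complex plane. -/
def OStrip : Set ℂ := {z : ℂ | 0 < z.re ∧ z.re < 1}

/-- `N` is a norm on the complex vector space `V`. -/
def IsNormC {V : Type*} [AddCommGroup V] [Module ℂ V] (N : V → ℝ) : Prop :=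
  (∀ x, 0 ≤ N x) ∧ (∀ x, N x = 0 → x = 0) ∧
  (∀ (c : ℂ) (x), N (c • x) = ‖c‖ * N x) ∧ (∀ x y, N (x + y) ≤ N x + N y)

/-- `N` is a lattice norm on `ℝⁿ`. -/
def IsLatticeNorm {n : ℕ} (N : (Fin n → ℝ) → ℝ) : Prop :=
  (∀ x, 0 ≤ N x) ∧ (∀ x, N x = 0 → x = 0) ∧
  (∀ (c : ℝ) (x), N (c • x) = |c| * N x) ∧ (∀ x y, N (x + y) ≤ N x + N y) ∧
  (∀ x y, (∀ i, |x i| ≤ |y i|) → N x ≤ N y)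

/-- The `r`-th power `X^r` of a lattice norm: `‖x‖_{X^r} = ‖ |x|^{1/r} ‖_X^r`. -/
def powNorm {n : ℕ} (r : ℝ) (N : (Fin n → ℝ) → ℝ) (x : Fin n → ℝ) : ℝ :=
  (N fun i => |x i| ^ (1 / r)) ^ r

/-- `N` is `p`-convex with constant `C`. -/
def ConvexWith {n : ℕ} (p C : ℝ) (N : (Fin n → ℝ) → ℝ) : Prop :=
  ∀ (m : ℕ) (x : Fin m → Fin n → ℝ),
    N (fun j => (∑ i, |x i j| ^ p) ^ (1 / p)) ≤ C * (∑ i, N (x i) ^ p) ^ (1 / p)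

/-- `N` is `p`-concave with constant `C`. -/
def ConcaveWith {n : ℕ} (p C : ℝ) (N : (Fin n → ℝ) → ℝ) : Prop :=
  ∀ (m : ℕ) (x : Fin m → Fin n → ℝ),
    (∑ i, N (x i) ^ p) ^ (1 / p) ≤ C * N (fun j => (∑ i, |x i j| ^ p) ^ (1 / p))

/-- The dual lattice norm on `ℝⁿ`. -/
def dualNR {n : ℕ} (N : (Fin n → ℝ) → ℝ) (y : Fin n → ℝ) : ℝ :=
  sSup {r : ℝ | ∃ x, N x ≤ 1 ∧ r = |∑ i, x i * y i|}

/-- The Calderón product norm `X₀^{1-θ}X₁^θ` on `ℝⁿ`. -/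
def calNorm {n : ℕ} (θ : ℝ) (N₀ N₁ : (Fin n → ℝ) → ℝ) (f : Fin n → ℝ) : ℝ :=
  sInf {c : ℝ | ∃ g h : Fin n → ℝ, (∀ i, |f i| = |g i| ^ (1 - θ) * |h i| ^ θ) ∧
    c = N₀ g ^ (1 - θ) * N₁ h ^ θ}

/-- The complex interpolation norm `[N₀,N₁]_θ`, computed via analytic functions
of finite type `z ↦ ∑ φᵢ(z) • vᵢ` on the strip (which, by density, gives the
complex interpolation norm on the intersection for couples with dense intersection). -/
def interpN {D : Type*} [AddCommGroup D] [Module ℂ D]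
    (θ : ℝ) (N₀ N₁ : D → ℝ) (x : D) : ℝ :=
  sInf {c : ℝ | ∃ (m : ℕ) (φ : Fin m → ℂ → ℂ) (v : Fin m → D),
    (∀ i, ContinuousOn (φ i) Strip) ∧
    (∀ i, DifferentiableOn ℂ (φ i) OStrip) ∧
    (∀ i, ∃ B : ℝ, ∀ z ∈ Strip, ‖φ i z‖ ≤ B) ∧
    (∑ i, φ i (θ : ℂ) • v i) = x ∧
    (∀ t : ℝ, N₀ (∑ i, φ i (Complex.I * t) • v i) ≤ c) ∧
    (∀ t : ℝ, N₁ (∑ i, φ i (1 + Complex.I * t) • v i) ≤ c)}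

/-- Operator "norm" of a map with respect to given norm functions. -/
def opN {X Y : Type*} (NX : X → ℝ) (NY : Y → ℝ) (T : X → Y) : ℝ :=
  sSup {r : ℝ | ∃ x, NX x ≤ 1 ∧ r = NY (T x)}

/-- The Hilbert space `ℓ₂`. -/
abbrev Hilb := lp (fun _ : ℕ => ℂ) 2

def hilbNorm (x : Hilb) : ℝ := ‖x‖

/-- `d_θ[M₀,M₁]`: the norm of the identity
`L(ℓ₂,[M₀,M₁]_θ) → [L(ℓ₂,M₀),L(ℓ₂,M₁)]_θ`. -/
def dTheta {V : Type*} [NormedAddCommGroup V] [NormedSpace ℂ V]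
    (θ : ℝ) (N₀ N₁ : V → ℝ) : ℝ :=
  sSup {r : ℝ | ∃ T : Hilb →L[ℂ] V,
    opN hilbNorm (interpN θ N₀ N₁) ⇑T ≤ 1 ∧
    r = interpN θ (fun S : Hilb →L[ℂ] V => opN hilbNorm N₀ ⇑S)
        (fun S : Hilb →L[ℂ] V => opN hilbNorm N₁ ⇑S) T}

/-- Rademacher average `(2^{-m} ∑_ε ‖∑ ±xᵢ‖²)`. -/
def radAvg {V : Type*} [AddCommGroup V] (N : V → ℝ) {m : ℕ} (x : Fin m → V) : ℝ :=
  ((2 : ℝ) ^ m)⁻¹ * ∑ ε : Fin m → Bool, N (∑ i, if ε i then x i else -x i) ^ 2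

/-- `N` has (Rademacher) type 2 with constant `C`. -/
def Type2With {V : Type*} [AddCommGroup V] (N : V → ℝ) (C : ℝ) : Prop :=
  ∀ (m : ℕ) (x : Fin m → V), Real.sqrt (radAvg N x) ≤ C * Real.sqrt (∑ i, N (x i) ^ 2)

/-- `N` has (Rademacher) cotype 2 with constant `C`. -/
def Cotype2With {V : Type*} [AddCommGroup V] (N : V → ℝ) (C : ℝ) : Prop :=
  ∀ (m : ℕ) (x : Fin m → V), Real.sqrt (∑ i, N (x i) ^ 2) ≤ C * Real.sqrt (radAvg N x)

/-- The injective tensor norm of two norm functions. -/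
def injN {V W : Type*} [AddCommGroup V] [Module ℂ V] [AddCommGroup W] [Module ℂ W]
    (NV : V → ℝ) (NW : W → ℝ) (z : TensorProduct ℂ V W) : ℝ :=
  sSup {r : ℝ | ∃ (φ : V →ₗ[ℂ] ℂ) (ψ : W →ₗ[ℂ] ℂ),
    (∀ x, ‖φ x‖ ≤ NV x) ∧ (∀ y, ‖ψ y‖ ≤ NW y) ∧
    r = ‖TensorProduct.lift (((LinearMap.mul ℂ ℂ).comp φ).compl₂ ψ) z‖}

/-- Dual norm on linear functionals. -/
def dualNC {V : Type*} [AddCommGroup V] [Module ℂ V] (N : V → ℝ) (φ : V →ₗ[ℂ] ℂ) : ℝ :=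
  sSup {r : ℝ | ∃ x, N x ≤ 1 ∧ r = ‖φ x‖}

/-- The space of bounded linear functionals (dual space of the completion). -/
def BddDual {V : Type*} [AddCommGroup V] [Module ℂ V] (N : V → ℝ) :
    Submodule ℂ (V →ₗ[ℂ] ℂ) where
  carrier := {φ | ∃ c : ℝ, ∀ x, ‖φ x‖ ≤ c * N x}
  zero_mem' := ⟨0, by simp⟩
  add_mem' := by
    rintro φ ψ ⟨c, hc⟩ ⟨d, hd⟩
    exact ⟨c + d, fun x => by
      have h1 := hc x; have h2 := hd x
      calc ‖(φ + ψ) x‖ = ‖φ x + ψ x‖ := by simp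
        _ ≤ ‖φ x‖ + ‖ψ x‖ := norm_add_le _ _
        _ ≤ (c + d) * N x := by rw [add_mul]; exact add_le_add h1 h2⟩
  smul_mem' := by
    rintro a φ ⟨c, hc⟩
    exact ⟨‖a‖ * c, fun x => by
      have : ‖(a • φ) x‖ = ‖a‖ * ‖φ x‖ := by simp [norm_smul]
      rw [this, mul_assoc]
      exact mul_le_mul_of_nonneg_left (hc x) (norm_nonneg a)⟩

/-- Strictly simple functions with values in `V`: the span of
`v`-valued indicators of finite-measure measurable sets. -/
def SimpleSub {Ω : Type*} [MeasurableSpace Ω] (μ : Measure Ω)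
    (V : Type*) [AddCommGroup V] [Module ℂ V] : Submodule ℂ (Ω → V) :=
  Submodule.span ℂ {f | ∃ (s : Set Ω) (v : V), MeasurableSet s ∧ μ s < ⊤ ∧
    f = s.indicator fun _ => v}

/-- A Banach function space over a measure `μ`, with `K`-valued functions. -/
structure BFS (Ω : Type*) [MeasurableSpace Ω] (μ : Measure Ω) (K : Type*) [RCLike K] where
  mem : (Ω → K) → Prop
  nrm : (Ω → K) → ℝ
  mem_zero : mem 0
  mem_add : ∀ f g, mem f → mem g → mem (f + g)
  mem_smul : ∀ (c : K) (f), mem f → mem (c • f)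
  mem_meas : ∀ f, mem f → AEStronglyMeasurable f μ
  ideal : ∀ f g, AEStronglyMeasurable f μ → mem g →
    (∀ᵐ ω ∂μ, ‖f ω‖ ≤ ‖g ω‖) → mem f ∧ nrm f ≤ nrm g
  nrm_nonneg : ∀ f, 0 ≤ nrm f
  nrm_eq_zero : ∀ f, mem f → nrm f = 0 → f =ᵐ[μ] 0
  nrm_add : ∀ f g, mem f → mem g → nrm (f + g) ≤ nrm f + nrm g
  nrm_smul : ∀ (c : K) (f), nrm (c • f) = ‖c‖ * nrm f
  mem_indicator : ∀ s : Set Ω, MeasurableSet s → μ s < ⊤ →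
    mem (s.indicator fun _ => 1)
  complete : ∀ f : ℕ → Ω → K, (∀ k, mem (f k)) →
    (∀ ε : ℝ, 0 < ε → ∃ N : ℕ, ∀ p q, N ≤ p → N ≤ q → nrm (f p - f q) < ε) →
    ∃ g, mem g ∧ ∀ ε : ℝ, 0 < ε → ∃ N : ℕ, ∀ p, N ≤ p → nrm (f p - g) < ε

variable {Ω : Type*} [MeasurableSpace Ω] {μ : Measure Ω} {K : Type*} [RCLike K]

/-- `X` is `r`-convex with constant `C`. -/
def BFS.RConvexWith (X : BFS Ω μ K) (r C : ℝ) : Prop :=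
  ∀ (m : ℕ) (f : Fin m → Ω → K), (∀ i, X.mem (f i)) →
    X.mem (fun ω => ((((∑ i, ‖f i ω‖ ^ r) ^ (1 / r) : ℝ) : K))) ∧
    X.nrm (fun ω => ((((∑ i, ‖f i ω‖ ^ r) ^ (1 / r) : ℝ) : K))) ≤
      C * (∑ i, X.nrm (f i) ^ r) ^ (1 / r)

/-- `X` is `r`-concave with constant `C`. -/
def BFS.RConcaveWith (X : BFS Ω μ K) (r C : ℝ) : Prop :=
  ∀ (m : ℕ) (f : Fin m → Ω → K), (∀ i, X.mem (f i)) →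
    (∑ i, X.nrm (f i) ^ r) ^ (1 / r) ≤
      C * X.nrm (fun ω => ((((∑ i, ‖f i ω‖ ^ r) ^ (1 / r) : ℝ) : K)))

/-!
Hölder's inequality, applied coordinatewise to a factorization `|x| = |u|^{1-θ}|v|^θ` and a
factorization `|y| = |g|^{1-θ}|k|^θ`, bounds the dual norm of the Calderón product by the
Calderón product of the duals.

For the converse put `D := ‖y‖_{(X₀^{1-θ}X₁^θ)'}`. If the Calderón norm of `y` in
`(X₀')^{1-θ}(X₁')^θ` exceeded `D`, the compact convex set `{‖g‖_{X₀'} ≤ D} × {‖k‖_{X₁'} ≤ D}`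
would miss the closed convex set of pairs `(g, k) ≥ 0` with `|y| ≤ g^{1-θ}k^θ`, and a functional
`(g, k) ↦ ⟨g, U⟩ + ⟨k, V⟩` would separate the two strictly. Norming vectors (Hahn–Banach) show
that it reaches `D (‖U‖_{X₀} + ‖V‖_{X₁})` on the first set. On the second set it gets down to that
value: for `U, V > 0` and `x := (U/‖U‖_{X₀})^{1-θ} (V/‖V‖_{X₁})^θ`, which has Calderón norm at most
`1`, the pair `g := ‖U‖_{X₀} x|y|/U`, `k := ‖V‖_{X₁} x|y|/V` satisfies `g^{1-θ}k^θ = |y|` and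
`⟨g, U⟩ + ⟨k, V⟩ = (‖U‖_{X₀} + ‖V‖_{X₁}) ⟨x, |y|⟩ ≤ D (‖U‖_{X₀} + ‖V‖_{X₁})`.
-/

lemma rpow_one_sub_mul_rpow_self {a : ℝ} (ha : 0 ≤ a) (θ : ℝ) : a ^ (1 - θ) * a ^ θ = a := by
  rw [← Real.rpow_add' ha (by simp), sub_add_cancel, Real.rpow_one]

lemma mul_rpow_one_sub_mul_mul_rpow {c a b : ℝ} (hc : 0 ≤ c) (ha : 0 ≤ a) (hb : 0 ≤ b) (θ : ℝ) :
    (c * a) ^ (1 - θ) * (c * b) ^ θ = c * (a ^ (1 - θ) * b ^ θ) := by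
  rw [Real.mul_rpow hc ha, Real.mul_rpow hc hb]
  linear_combination (a ^ (1 - θ) * b ^ θ) * rpow_one_sub_mul_rpow_self hc θ

lemma div_rpow_one_sub_mul_div_rpow {c s r : ℝ} (hc : 0 ≤ c) (hs : 0 < s) (hr : 0 < r) (θ : ℝ) :
    (c * (s ^ (1 - θ) * r ^ θ) / s) ^ (1 - θ) * (c * (s ^ (1 - θ) * r ^ θ) / r) ^ θ = c := by
  have hm : 0 < s ^ (1 - θ) * r ^ θ := by positivity
  rw [Real.div_rpow (by positivity) hs.le, Real.div_rpow (by positivity) hr.le, div_mul_div_comm,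
    rpow_one_sub_mul_rpow_self (by positivity), mul_div_assoc, div_self hm.ne', mul_one]

lemma rpow_one_sub_mul_rpow_le_of_le {θ a b c d : ℝ} (hθ0 : 0 ≤ θ) (hθ1 : θ ≤ 1) (ha : 0 ≤ a)
    (hb : 0 ≤ b) (hac : a ≤ c) (hbd : b ≤ d) : a ^ (1 - θ) * b ^ θ ≤ c ^ (1 - θ) * d ^ θ :=
  mul_le_mul (Real.rpow_le_rpow ha hac (sub_nonneg.2 hθ1)) (Real.rpow_le_rpow hb hbd hθ0)
    (Real.rpow_nonneg hb θ) (Real.rpow_nonneg (ha.trans hac) _)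

theorem sum_rpow_one_sub_mul_rpow_le {ι : Type*} (s : Finset ι) {θ : ℝ} (hθ0 : 0 < θ) (hθ1 : θ < 1)
    {a b : ι → ℝ} (ha : ∀ i ∈ s, 0 ≤ a i) (hb : ∀ i ∈ s, 0 ≤ b i) :
    ∑ i ∈ s, a i ^ (1 - θ) * b i ^ θ ≤ (∑ i ∈ s, a i) ^ (1 - θ) * (∑ i ∈ s, b i) ^ θ := by
  have cancel : ∀ {c t : ℝ}, 0 ≤ c → t ≠ 0 → (c ^ t) ^ t⁻¹ = c := fun hc ht => by
    rw [← Real.rpow_mul hc, mul_inv_cancel₀ ht, Real.rpow_one]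
  have h := Real.inner_le_Lp_mul_Lq_of_nonneg s (Real.HolderConjugate.one_sub_inv_inv hθ0 hθ1)
    (fun i hi => Real.rpow_nonneg (ha i hi) (1 - θ)) (fun i hi => Real.rpow_nonneg (hb i hi) θ)
  rwa [sum_congr rfl fun i hi => cancel (ha i hi) (sub_ne_zero.2 hθ1.ne'),
    sum_congr rfl fun i hi => cancel (hb i hi) hθ0.ne', one_div, inv_inv, one_div, inv_inv] at h

lemma rpow_one_sub_mul_rpow_add_le {θ a b c d : ℝ} (hθ0 : 0 < θ) (hθ1 : θ < 1) (ha : 0 ≤ a)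
    (hb : 0 ≤ b) (hc : 0 ≤ c) (hd : 0 ≤ d) :
    a ^ (1 - θ) * b ^ θ + c ^ (1 - θ) * d ^ θ ≤ (a + c) ^ (1 - θ) * (b + d) ^ θ := by
  simpa [Fin.sum_univ_two] using sum_rpow_one_sub_mul_rpow_le univ hθ0 hθ1 (a := ![a, c])
    (b := ![b, d]) (by simp [Fin.forall_fin_two, ha, hc]) (by simp [Fin.forall_fin_two, hb, hd])

lemma _root_.LinearMap.apply_eq_sum_mul {ι : Type*} [Fintype ι] [DecidableEq ι]
    (φ : (ι → ℝ) →ₗ[ℝ] ℝ) (x : ι → ℝ) : φ x = ∑ i, x i * φ (Pi.single i 1) := by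
  rw [φ.pi_apply_eq_sum_univ x]
  refine sum_congr rfl fun i _ => ?_
  rw [smul_eq_mul]
  congr 2
  ext j
  simp [Pi.single_apply, eq_comm]

lemma _root_.ContinuousLinearMap.exists_apply_eq_sum_mul_add_sum_mul {ι : Type*} [Fintype ι]
    [DecidableEq ι] (f : (ι → ℝ) × (ι → ℝ) →L[ℝ] ℝ) :
    ∃ U V : ι → ℝ, ∀ p, f p = ∑ i, p.1 i * U i + ∑ i, p.2 i * V i := by
  refine ⟨fun i => f (Pi.single i 1, 0), fun i => f (0, Pi.single i 1), fun p => ?_⟩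
  have h₁ := LinearMap.apply_eq_sum_mul ((f : (ι → ℝ) × (ι → ℝ) →ₗ[ℝ] ℝ) ∘ₗ LinearMap.inl ℝ _ _) p.1
  have h₂ := LinearMap.apply_eq_sum_mul ((f : (ι → ℝ) × (ι → ℝ) →ₗ[ℝ] ℝ) ∘ₗ LinearMap.inr ℝ _ _) p.2
  simp only [LinearMap.comp_apply, LinearMap.inl_apply, LinearMap.inr_apply,
    ContinuousLinearMap.coe_coe] at h₁ h₂
  rw [← h₁, ← h₂, ← map_add, Prod.mk_add_mk, add_zero, zero_add]

lemma exists_abs_eq_sum_mul_eq {ι : Type*} [Fintype ι] (x y : ι → ℝ) :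
    ∃ x' : ι → ℝ, (∀ i, |x' i| = |x i|) ∧ ∑ i, x' i * y i = ∑ i, |x i| * |y i| := by
  refine ⟨fun i => if 0 ≤ y i then |x i| else -|x i|, fun i => by dsimp only; split_ifs <;> simp,
    sum_congr rfl fun i _ => ?_⟩
  dsimp only
  split_ifs with hy
  · rw [abs_of_nonneg hy]
  · rw [abs_of_neg (not_le.1 hy)]
    ring

section DualNorm

variable {n : ℕ} {N : (Fin n → ℝ) → ℝ}

lemma dualNR_nonneg (N : (Fin n → ℝ) → ℝ) (y : Fin n → ℝ) : 0 ≤ dualNR N y :=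
  Real.sSup_nonneg (by rintro _ ⟨x, -, rfl⟩; exact abs_nonneg _)

open scoped Pointwise in
lemma dualNR_smul (N : (Fin n → ℝ) → ℝ) (c : ℝ) (y : Fin n → ℝ) :
    dualNR N (c • y) = |c| * dualNR N y := by
  have hset : {r | ∃ x, N x ≤ 1 ∧ r = |∑ i, x i * (c • y) i|} =
      |c| • {r | ∃ x, N x ≤ 1 ∧ r = |∑ i, x i * y i|} := by
    ext r
    simp only [Set.mem_smul_set, Set.mem_ofPred_eq, smul_eq_mul, Pi.smul_apply]
    constructor
    · rintro ⟨x, hx, rfl⟩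
      exact ⟨_, ⟨x, hx, rfl⟩, by rw [← abs_mul, mul_sum]; simp only [mul_left_comm]⟩
    · rintro ⟨_, ⟨x, hx, rfl⟩, rfl⟩
      exact ⟨x, hx, by rw [← abs_mul, mul_sum]; simp only [mul_left_comm]⟩
  rw [dualNR, hset, Real.sSup_smul_of_nonneg (abs_nonneg c), smul_eq_mul, dualNR]

lemma le_dualNR_of_mul_abs_le {w : Fin n → ℝ} (hw : ∀ i, 0 < w i)
    (hN : ∀ x i, w i * |x i| ≤ N x) {x : Fin n → ℝ} (hx : N x ≤ 1) (y : Fin n → ℝ) :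
    |∑ i, x i * y i| ≤ dualNR N y := by
  refine le_csSup ⟨∑ i, |y i| / w i, ?_⟩ ⟨x, hx, rfl⟩
  rintro _ ⟨x', hx', rfl⟩
  refine (abs_sum_le_sum_abs _ _).trans (sum_le_sum fun i _ => ?_)
  rw [abs_mul, le_div_iff₀ (hw i)]
  calc |x' i| * |y i| * w i = |y i| * (w i * |x' i|) := by ring
    _ ≤ |y i| * 1 := by gcongr; exact (hN x' i).trans hx'
    _ = |y i| := mul_one _

end DualNorm

namespace IsLatticeNorm

variable {n : ℕ} {N : (Fin n → ℝ) → ℝ}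

lemma nonneg (h : IsLatticeNorm N) (x : Fin n → ℝ) : 0 ≤ N x := h.1 x

lemma eq_zero (h : IsLatticeNorm N) {x : Fin n → ℝ} (hx : N x = 0) : x = 0 := h.2.1 x hx

lemma smul (h : IsLatticeNorm N) (c : ℝ) (x : Fin n → ℝ) : N (c • x) = |c| * N x := h.2.2.1 c x

lemma add_le (h : IsLatticeNorm N) (x y : Fin n → ℝ) : N (x + y) ≤ N x + N y := h.2.2.2.1 x y

lemma mono (h : IsLatticeNorm N) {x y : Fin n → ℝ} (hxy : ∀ i, |x i| ≤ |y i|) : N x ≤ N y :=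
  h.2.2.2.2 x y hxy

lemma apply_zero (h : IsLatticeNorm N) : N 0 = 0 := by simpa using h.smul 0 0

lemma apply_neg (h : IsLatticeNorm N) (x : Fin n → ℝ) : N (-x) = N x := by
  simpa using h.smul (-1) x

lemma apply_abs (h : IsLatticeNorm N) (x : Fin n → ℝ) : N (fun i => |x i|) = N x :=
  le_antisymm (h.mono fun i => (abs_abs (x i)).le) (h.mono fun i => (abs_abs (x i)).ge)

lemma apply_abs_add_le (h : IsLatticeNorm N) (x : Fin n → ℝ) {δ : ℝ} (hδ : 0 ≤ δ) :
    N (fun i => |x i| + δ) ≤ N x + δ * N 1 := by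
  calc N (fun i => |x i| + δ) = N ((fun i => |x i|) + δ • 1) := by congr 1; ext; simp
    _ ≤ N (fun i => |x i|) + N (δ • 1) := h.add_le _ _
    _ = N x + δ * N 1 := by rw [h.apply_abs, h.smul, abs_of_nonneg hδ]

lemma mul_abs_le (h : IsLatticeNorm N) (x : Fin n → ℝ) (i : Fin n) :
    N (Pi.single i 1) * |x i| ≤ N x := by
  rw [mul_comm, ← h.smul]
  refine h.mono fun j => ?_
  rcases eq_or_ne j i with rfl | hj <;> simp [*]

lemma single_pos (h : IsLatticeNorm N) (i : Fin n) : 0 < N (Pi.single i 1) :=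
  (h.nonneg _).lt_of_ne' fun h0 => by simpa using congrFun (h.eq_zero h0) i

lemma convexOn (h : IsLatticeNorm N) : ConvexOn ℝ Set.univ N :=
  ⟨convex_univ, fun x _ y _ a b ha hb _ => by
    simpa [h.smul, abs_of_nonneg ha, abs_of_nonneg hb] using h.add_le (a • x) (b • y)⟩

lemma convex_le (h : IsLatticeNorm N) (r : ℝ) : Convex ℝ {x | N x ≤ r} := by
  simpa using h.convexOn.convex_le r

lemma isCompact_le (h : IsLatticeNorm N) (r : ℝ) : IsCompact {x | N x ≤ r} := by
  refine (isCompact_univ_pi fun i => isCompact_Icc (a := -(r / N (Pi.single i 1)))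
    (b := r / N (Pi.single i 1))).of_isClosed_subset
    (isClosed_le h.convexOn.locallyLipschitz.continuous continuous_const) fun x hx i _ => ?_
  rw [Set.mem_Icc, ← abs_le, le_div_iff₀' (h.single_pos i)]
  exact (h.mul_abs_le x i).trans hx

lemma le_dualNR (h : IsLatticeNorm N) {x : Fin n → ℝ} (hx : N x ≤ 1) (y : Fin n → ℝ) :
    |∑ i, x i * y i| ≤ dualNR N y :=
  le_dualNR_of_mul_abs_le h.single_pos h.mul_abs_le hx y

lemma abs_sum_mul_le (h : IsLatticeNorm N) (x y : Fin n → ℝ) :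
    |∑ i, x i * y i| ≤ N x * dualNR N y := by
  rcases (h.nonneg x).eq_or_lt with hx | hx
  · simp [h.eq_zero hx.symm, h.apply_zero]
  have hx1 : N ((N x)⁻¹ • x) ≤ 1 := by
    rw [h.smul, abs_inv, abs_of_pos hx, inv_mul_cancel₀ hx.ne']
  have := h.le_dualNR hx1 y
  simp only [Pi.smul_apply, smul_eq_mul, mul_assoc, ← mul_sum, abs_mul, abs_inv,
    abs_of_pos hx] at this
  rwa [inv_mul_le_iff₀ hx] at this

lemma sum_abs_mul_abs_le (h : IsLatticeNorm N) (x y : Fin n → ℝ) :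
    ∑ i, |x i| * |y i| ≤ N x * dualNR N y := by
  obtain ⟨x', hx', hsum⟩ := exists_abs_eq_sum_mul_eq x y
  calc ∑ i, |x i| * |y i| = ∑ i, x' i * y i := hsum.symm
    _ ≤ |∑ i, x' i * y i| := le_abs_self _
    _ ≤ N x' * dualNR N y := h.abs_sum_mul_le x' y
    _ = N x * dualNR N y := by
      rw [(h.mono fun i => (hx' i).le).antisymm (h.mono fun i => (hx' i).ge)]

lemma dualNR_add_le (h : IsLatticeNorm N) (y z : Fin n → ℝ) :
    dualNR N (y + z) ≤ dualNR N y + dualNR N z := by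
  refine Real.sSup_le ?_ (add_nonneg (dualNR_nonneg N y) (dualNR_nonneg N z))
  rintro _ ⟨x, hx, rfl⟩
  simp only [Pi.add_apply, mul_add, sum_add_distrib]
  exact (abs_add_le _ _).trans (add_le_add (h.le_dualNR hx y) (h.le_dualNR hx z))

lemma dualNR_mono (h : IsLatticeNorm N) {y z : Fin n → ℝ} (hyz : ∀ i, |y i| ≤ |z i|) :
    dualNR N y ≤ dualNR N z := by
  refine Real.sSup_le ?_ (dualNR_nonneg N z)
  rintro _ ⟨x, hx, rfl⟩
  calc |∑ i, x i * y i| ≤ ∑ i, |x i| * |y i| := by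
        simpa only [abs_mul] using abs_sum_le_sum_abs (fun i => x i * y i) univ
    _ ≤ ∑ i, |x i| * |z i| :=
        sum_le_sum fun i _ => mul_le_mul_of_nonneg_left (hyz i) (abs_nonneg _)
    _ ≤ N x * dualNR N z := h.sum_abs_mul_abs_le x z
    _ ≤ dualNR N z := mul_le_of_le_one_left (dualNR_nonneg N z) hx

lemma abs_le_mul_dualNR (h : IsLatticeNorm N) (y : Fin n → ℝ) (i : Fin n) :
    |y i| ≤ N (Pi.single i 1) * dualNR N y := by
  simpa [Pi.single_apply] using h.abs_sum_mul_le (Pi.single i 1) y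

protected lemma dualNR (h : IsLatticeNorm N) : IsLatticeNorm (dualNR N) :=
  ⟨dualNR_nonneg N,
    fun y hy => funext fun i => abs_nonpos_iff.1 (by simpa [hy] using h.abs_le_mul_dualNR y i),
    dualNR_smul N, h.dualNR_add_le, fun _ _ => h.dualNR_mono⟩

lemma exists_dualNR_le_one_sum_mul_eq (h : IsLatticeNorm N) (U : Fin n → ℝ) :
    ∃ g, dualNR N g ≤ 1 ∧ ∑ i, g i * U i = N U := by
  rcases eq_or_ne U 0 with rfl | hU
  · have h0 : dualNR N 0 = 0 := by simpa using dualNR_smul N 0 0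
    exact ⟨0, h0.trans_le zero_le_one, by simp [h.apply_zero]⟩
  obtain ⟨φ, hφU, hφ⟩ := exists_extension_of_le_sublinear (LinearPMap.mkSpanSingleton U (N U) hU) N
    (fun c hc x => by rw [h.smul, abs_of_pos hc]) h.add_le (by
      rintro ⟨_, hz⟩
      obtain ⟨c, rfl⟩ := Submodule.mem_span_singleton.1 hz
      rw [LinearPMap.mkSpanSingleton'_apply, smul_eq_mul, h.smul]
      exact mul_le_mul_of_nonneg_right (le_abs_self c) (h.nonneg U))
  refine ⟨fun i => φ (Pi.single i 1), Real.sSup_le ?_ zero_le_one, ?_⟩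
  · rintro _ ⟨x, hx, rfl⟩
    rw [← φ.apply_eq_sum_mul]
    refine abs_le.2 ⟨?_, (hφ x).trans hx⟩
    have := hφ (-x)
    rw [map_neg, h.apply_neg] at this
    linarith
  · simp_rw [mul_comm]
    rw [← φ.apply_eq_sum_mul, hφU ⟨U, Submodule.mem_span_singleton_self U⟩,
      LinearPMap.mkSpanSingleton_apply]

end IsLatticeNorm

section Calderon

variable {n : ℕ} {θ : ℝ} {N₀ N₁ : (Fin n → ℝ) → ℝ}

lemma abs_eq_rpow_one_sub_mul_rpow (a θ : ℝ) : |a| = |a| ^ (1 - θ) * |a| ^ θ :=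
  (rpow_one_sub_mul_rpow_self (abs_nonneg a) θ).symm

lemma calNorm_nonneg (h₀ : IsLatticeNorm N₀) (h₁ : IsLatticeNorm N₁) (f : Fin n → ℝ) :
    0 ≤ calNorm θ N₀ N₁ f :=
  Real.sInf_nonneg (by
    rintro _ ⟨g, k, -, rfl⟩
    exact mul_nonneg (Real.rpow_nonneg (h₀.nonneg g) _) (Real.rpow_nonneg (h₁.nonneg k) _))

lemma calNorm_le (h₀ : IsLatticeNorm N₀) (h₁ : IsLatticeNorm N₁) {f g k : Fin n → ℝ}
    (hf : ∀ i, |f i| = |g i| ^ (1 - θ) * |k i| ^ θ) :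
    calNorm θ N₀ N₁ f ≤ N₀ g ^ (1 - θ) * N₁ k ^ θ := by
  refine csInf_le ⟨0, ?_⟩ ⟨g, k, hf, rfl⟩
  rintro _ ⟨g', k', -, rfl⟩
  exact mul_nonneg (Real.rpow_nonneg (h₀.nonneg g') _) (Real.rpow_nonneg (h₁.nonneg k') _)

lemma calNorm_le_of_abs_le (hθ0 : 0 ≤ θ) (hθ1 : θ ≤ 1) (h₀ : IsLatticeNorm N₀)
    (h₁ : IsLatticeNorm N₁) {f g k : Fin n → ℝ}
    (hf : ∀ i, |f i| ≤ |g i| ^ (1 - θ) * |k i| ^ θ) :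
    calNorm θ N₀ N₁ f ≤ N₀ g ^ (1 - θ) * N₁ k ^ θ := by
  -- Where the denominator vanishes, so does `f i`, and `t i = 0`.
  set t : Fin n → ℝ := fun i => |f i| / (|g i| ^ (1 - θ) * |k i| ^ θ)
  have ht0 : ∀ i, 0 ≤ t i := fun i => by positivity
  have ht1 : ∀ i, t i ≤ 1 := fun i => div_le_one_of_le₀ (hf i) (by positivity)
  have hscale : ∀ u : Fin n → ℝ, ∀ i, |(t * u) i| ≤ |u i| := fun u i => by
    rw [Pi.mul_apply, abs_mul, abs_of_nonneg (ht0 i)]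
    exact mul_le_of_le_one_left (abs_nonneg _) (ht1 i)
  calc calNorm θ N₀ N₁ f ≤ N₀ (t * g) ^ (1 - θ) * N₁ (t * k) ^ θ := by
        refine calNorm_le h₀ h₁ fun i => ?_
        rw [Pi.mul_apply, Pi.mul_apply, abs_mul, abs_mul, abs_of_nonneg (ht0 i),
          mul_rpow_one_sub_mul_mul_rpow (ht0 i) (abs_nonneg _) (abs_nonneg _),
          div_mul_cancel_of_imp fun h0 => le_antisymm (h0 ▸ hf i) (abs_nonneg _)]
    _ ≤ N₀ g ^ (1 - θ) * N₁ k ^ θ := rpow_one_sub_mul_rpow_le_of_le hθ0 hθ1 (h₀.nonneg _)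
        (h₁.nonneg _) (h₀.mono (hscale g)) (h₁.mono (hscale k))

lemma mul_abs_le_calNorm (hθ0 : 0 ≤ θ) (hθ1 : θ ≤ 1) (h₀ : IsLatticeNorm N₀)
    (h₁ : IsLatticeNorm N₁) (f : Fin n → ℝ) (i : Fin n) :
    N₀ (Pi.single i 1) ^ (1 - θ) * N₁ (Pi.single i 1) ^ θ * |f i| ≤ calNorm θ N₀ N₁ f := by
  refine le_csInf ⟨_, f, f, fun i => abs_eq_rpow_one_sub_mul_rpow (f i) θ, rfl⟩ ?_
  rintro _ ⟨g, k, hf, rfl⟩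
  rw [hf i]
  calc N₀ (Pi.single i 1) ^ (1 - θ) * N₁ (Pi.single i 1) ^ θ * (|g i| ^ (1 - θ) * |k i| ^ θ)
      = (N₀ (Pi.single i 1) * |g i|) ^ (1 - θ) * (N₁ (Pi.single i 1) * |k i|) ^ θ := by
        rw [Real.mul_rpow (h₀.nonneg _) (abs_nonneg _), Real.mul_rpow (h₁.nonneg _) (abs_nonneg _)]
        ring
    _ ≤ N₀ g ^ (1 - θ) * N₁ k ^ θ :=
        rpow_one_sub_mul_rpow_le_of_le hθ0 hθ1 (mul_nonneg (h₀.nonneg _) (abs_nonneg _))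
          (mul_nonneg (h₁.nonneg _) (abs_nonneg _)) (h₀.mul_abs_le g i) (h₁.mul_abs_le k i)

lemma abs_sum_mul_le_dualNR_calNorm (hθ0 : 0 ≤ θ) (hθ1 : θ ≤ 1) (h₀ : IsLatticeNorm N₀)
    (h₁ : IsLatticeNorm N₁) {x : Fin n → ℝ} (hx : calNorm θ N₀ N₁ x ≤ 1) (y : Fin n → ℝ) :
    |∑ i, x i * y i| ≤ dualNR (calNorm θ N₀ N₁) y :=
  le_dualNR_of_mul_abs_le (fun i => mul_pos (Real.rpow_pos_of_pos (h₀.single_pos i) _)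
    (Real.rpow_pos_of_pos (h₁.single_pos i) _)) (mul_abs_le_calNorm hθ0 hθ1 h₀ h₁) hx y

end Calderon

section Duality

variable {n : ℕ} {θ : ℝ} {N₀ N₁ : (Fin n → ℝ) → ℝ}

lemma abs_sum_mul_le_of_factorizations (hθ0 : 0 < θ) (hθ1 : θ < 1) (h₀ : IsLatticeNorm N₀)
    (h₁ : IsLatticeNorm N₁) {x y u v g k : Fin n → ℝ}
    (hx : ∀ i, |x i| = |u i| ^ (1 - θ) * |v i| ^ θ)
    (hy : ∀ i, |y i| = |g i| ^ (1 - θ) * |k i| ^ θ) :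
    |∑ i, x i * y i| ≤
      N₀ u ^ (1 - θ) * N₁ v ^ θ * (dualNR N₀ g ^ (1 - θ) * dualNR N₁ k ^ θ) :=
  calc |∑ i, x i * y i| ≤ ∑ i, |x i| * |y i| := by
        simpa only [abs_mul] using abs_sum_le_sum_abs (fun i => x i * y i) univ
    _ = ∑ i, (|u i| * |g i|) ^ (1 - θ) * (|v i| * |k i|) ^ θ := sum_congr rfl fun i _ => by
        rw [hx, hy, Real.mul_rpow (abs_nonneg _) (abs_nonneg _),
          Real.mul_rpow (abs_nonneg _) (abs_nonneg _)]
        ring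
    _ ≤ (∑ i, |u i| * |g i|) ^ (1 - θ) * (∑ i, |v i| * |k i|) ^ θ :=
        sum_rpow_one_sub_mul_rpow_le univ hθ0 hθ1 (fun i _ => by positivity)
          (fun i _ => by positivity)
    _ ≤ (N₀ u * dualNR N₀ g) ^ (1 - θ) * (N₁ v * dualNR N₁ k) ^ θ :=
        rpow_one_sub_mul_rpow_le_of_le hθ0.le hθ1.le (by positivity) (by positivity)
          (h₀.sum_abs_mul_abs_le u g) (h₁.sum_abs_mul_abs_le v k)
    _ = N₀ u ^ (1 - θ) * N₁ v ^ θ * (dualNR N₀ g ^ (1 - θ) * dualNR N₁ k ^ θ) := by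
        rw [Real.mul_rpow (h₀.nonneg u) (dualNR_nonneg N₀ g),
          Real.mul_rpow (h₁.nonneg v) (dualNR_nonneg N₁ k)]
        ring

open scoped Pointwise in
theorem dualNR_calNorm_le (hθ0 : 0 < θ) (hθ1 : θ < 1) (h₀ : IsLatticeNorm N₀)
    (h₁ : IsLatticeNorm N₁) (y : Fin n → ℝ) :
    dualNR (calNorm θ N₀ N₁) y ≤ calNorm θ (dualNR N₀) (dualNR N₁) y := by
  refine Real.sSup_le ?_ (calNorm_nonneg h₀.dualNR h₁.dualNR y)
  rintro _ ⟨x, hx, rfl⟩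
  refine le_csInf ⟨_, y, y, fun i => abs_eq_rpow_one_sub_mul_rpow (y i) θ, rfl⟩ ?_
  rintro _ ⟨g, k, hy, rfl⟩
  set P := dualNR N₀ g ^ (1 - θ) * dualNR N₁ k ^ θ
  have hP : 0 ≤ P :=
    mul_nonneg (Real.rpow_nonneg (dualNR_nonneg N₀ g) _) (Real.rpow_nonneg (dualNR_nonneg N₁ k) _)
  have hxy : |∑ i, x i * y i| ≤ P * calNorm θ N₀ N₁ x := by
    rw [calNorm, ← smul_eq_mul, ← Real.sInf_smul_of_nonneg hP]
    refine le_csInf (Set.Nonempty.smul_set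
      ⟨_, x, x, fun i => abs_eq_rpow_one_sub_mul_rpow (x i) θ, rfl⟩) ?_
    rintro _ ⟨_, ⟨u, v, hx, rfl⟩, rfl⟩
    simp only [smul_eq_mul]
    rw [mul_comm]
    exact abs_sum_mul_le_of_factorizations hθ0 hθ1 h₀ h₁ hx hy
  exact hxy.trans (mul_le_of_le_one_right hP hx)

def dominatingPairs (θ : ℝ) (y : Fin n → ℝ) : Set ((Fin n → ℝ) × (Fin n → ℝ)) :=
  {p | 0 ≤ p.1 ∧ 0 ≤ p.2 ∧ ∀ i, |y i| ≤ p.1 i ^ (1 - θ) * p.2 i ^ θ}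

lemma convex_dominatingPairs (hθ0 : 0 < θ) (hθ1 : θ < 1) (y : Fin n → ℝ) :
    Convex ℝ (dominatingPairs θ y) := by
  rintro p ⟨hp₁, hp₂, hp⟩ q ⟨hq₁, hq₂, hq⟩ a b ha hb hab
  refine ⟨add_nonneg (smul_nonneg ha hp₁) (smul_nonneg hb hq₁),
    add_nonneg (smul_nonneg ha hp₂) (smul_nonneg hb hq₂), fun i => ?_⟩
  calc |y i| = a * |y i| + b * |y i| := by rw [← add_mul, hab, one_mul]
    _ ≤ a * (p.1 i ^ (1 - θ) * p.2 i ^ θ) + b * (q.1 i ^ (1 - θ) * q.2 i ^ θ) := by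
        gcongr
        exacts [hp i, hq i]
    _ = (a * p.1 i) ^ (1 - θ) * (a * p.2 i) ^ θ + (b * q.1 i) ^ (1 - θ) * (b * q.2 i) ^ θ := by
        rw [mul_rpow_one_sub_mul_mul_rpow ha (hp₁ i) (hp₂ i),
          mul_rpow_one_sub_mul_mul_rpow hb (hq₁ i) (hq₂ i)]
    _ ≤ (a * p.1 i + b * q.1 i) ^ (1 - θ) * (a * p.2 i + b * q.2 i) ^ θ :=
        rpow_one_sub_mul_rpow_add_le hθ0 hθ1 (mul_nonneg ha (hp₁ i)) (mul_nonneg ha (hp₂ i))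
          (mul_nonneg hb (hq₁ i)) (mul_nonneg hb (hq₂ i))

lemma isClosed_dominatingPairs (hθ0 : 0 ≤ θ) (hθ1 : θ ≤ 1) (y : Fin n → ℝ) :
    IsClosed (dominatingPairs θ y) := by
  have hθ1' : 0 ≤ 1 - θ := sub_nonneg.2 hθ1
  simp only [dominatingPairs, Set.ofPred_and, Set.ofPred_forall]
  exact (isClosed_le continuous_const continuous_fst).inter
    ((isClosed_le continuous_const continuous_snd).inter
      (isClosed_iInter fun i => isClosed_le continuous_const (by fun_prop (disch := assumption))))

lemma exists_mem_dominatingPairs_sum_le (hθ0 : 0 ≤ θ) (hθ1 : θ ≤ 1) (h₀ : IsLatticeNorm N₀)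
    (h₁ : IsLatticeNorm N₁) (y : Fin n → ℝ) {U V : Fin n → ℝ} (hU : ∀ i, 0 < U i)
    (hV : ∀ i, 0 < V i) :
    ∃ p ∈ dominatingPairs θ y, ∑ i, p.1 i * U i + ∑ i, p.2 i * V i ≤
      dualNR (calNorm θ N₀ N₁) y * (N₀ U + N₁ V) := by
  set a := N₀ U
  set b := N₁ V
  -- `0 < a` holds only when `Fin n` is nonempty, hence the index `i`.
  have ha : ∀ i, 0 < a := fun i => (mul_pos (h₀.single_pos i) (abs_pos.2 (hU i).ne')).trans_le
    (h₀.mul_abs_le U i)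
  have hb : ∀ i, 0 < b := fun i => (mul_pos (h₁.single_pos i) (abs_pos.2 (hV i).ne')).trans_le
    (h₁.mul_abs_le V i)
  set x : Fin n → ℝ := fun i => (U i / a) ^ (1 - θ) * (V i / b) ^ θ
  have hx0 : ∀ i, 0 ≤ x i := fun i => mul_nonneg
    (Real.rpow_nonneg (div_pos (hU i) (ha i)).le _) (Real.rpow_nonneg (div_pos (hV i) (hb i)).le _)
  have hx : ∑ i, x i * |y i| ≤ dualNR (calNorm θ N₀ N₁) y := by
    obtain ⟨x', hx', hsum⟩ := exists_abs_eq_sum_mul_eq x y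
    have hcal : calNorm θ N₀ N₁ x' ≤ 1 := by
      refine (calNorm_le_of_abs_le hθ0 hθ1 h₀ h₁ (g := a⁻¹ • U) (k := b⁻¹ • V) fun i => ?_).trans ?_
      · rw [hx' i, abs_of_nonneg (hx0 i)]
        simp only [Pi.smul_apply, smul_eq_mul, inv_mul_eq_div, abs_of_pos (div_pos (hU i) (ha i)),
          abs_of_pos (div_pos (hV i) (hb i))]
        exact le_rfl
      · have hc : ∀ c : ℝ, 0 ≤ c → 0 ≤ |c⁻¹| * c ∧ |c⁻¹| * c ≤ 1 := fun c hc => by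
          rw [abs_inv, abs_of_nonneg hc]
          exact ⟨mul_nonneg (inv_nonneg.2 hc) hc, inv_mul_le_one⟩
        obtain ⟨ha0, ha1⟩ := hc a (h₀.nonneg U)
        obtain ⟨hb0, hb1⟩ := hc b (h₁.nonneg V)
        rw [h₀.smul, h₁.smul]
        exact mul_le_one₀ (Real.rpow_le_one ha0 ha1 (sub_nonneg.2 hθ1))
          (Real.rpow_nonneg hb0 θ) (Real.rpow_le_one hb0 hb1 hθ0)
    calc ∑ i, x i * |y i| = ∑ i, x' i * y i := by
          rw [hsum]
          exact sum_congr rfl fun i _ => by rw [abs_of_nonneg (hx0 i)]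
      _ ≤ |∑ i, x' i * y i| := le_abs_self _
      _ ≤ dualNR (calNorm θ N₀ N₁) y := abs_sum_mul_le_dualNR_calNorm hθ0 hθ1 h₀ h₁ hcal y
  refine ⟨(fun i => |y i| * x i / (U i / a), fun i => |y i| * x i / (V i / b)),
    ⟨fun i => ?_, fun i => ?_, fun i => ?_⟩, ?_⟩
  · exact div_nonneg (mul_nonneg (abs_nonneg _) (hx0 i)) (div_pos (hU i) (ha i)).le
  · exact div_nonneg (mul_nonneg (abs_nonneg _) (hx0 i)) (div_pos (hV i) (hb i)).le
  · exact (div_rpow_one_sub_mul_div_rpow (abs_nonneg (y i)) (div_pos (hU i) (ha i))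
      (div_pos (hV i) (hb i)) θ).ge
  · calc ∑ i, |y i| * x i / (U i / a) * U i + ∑ i, |y i| * x i / (V i / b) * V i
        = (a + b) * ∑ i, x i * |y i| := by
          rw [add_mul, mul_sum, mul_sum, ← sum_add_distrib, ← sum_add_distrib]
          refine sum_congr rfl fun i _ => ?_
          field_simp [(hU i).ne', (hV i).ne', (ha i).ne', (hb i).ne']
      _ ≤ (a + b) * dualNR (calNorm θ N₀ N₁) y := by
          gcongr
          exact add_nonneg (h₀.nonneg U) (h₁.nonneg V)
      _ = dualNR (calNorm θ N₀ N₁) y * (a + b) := mul_comm _ _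

theorem calNorm_dualNR_le (hθ0 : 0 < θ) (hθ1 : θ < 1) (h₀ : IsLatticeNorm N₀)
    (h₁ : IsLatticeNorm N₁) (y : Fin n → ℝ) :
    calNorm θ (dualNR N₀) (dualNR N₁) y ≤ dualNR (calNorm θ N₀ N₁) y := by
  set D := dualNR (calNorm θ N₀ N₁) y
  have hD0 : 0 ≤ D := dualNR_nonneg _ y
  by_contra! hD
  set B := {g | dualNR N₀ g ≤ D} ×ˢ {k | dualNR N₁ k ≤ D}
  have hdisj : Disjoint B (dominatingPairs θ y) := by
    refine Set.disjoint_left.2 fun p ⟨hg, hk⟩ ⟨hp₁, hp₂, hp⟩ => hD.not_ge ?_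
    calc calNorm θ (dualNR N₀) (dualNR N₁) y ≤ dualNR N₀ p.1 ^ (1 - θ) * dualNR N₁ p.2 ^ θ :=
          calNorm_le_of_abs_le hθ0.le hθ1.le h₀.dualNR h₁.dualNR fun i => by
            simpa [abs_of_nonneg (hp₁ i), abs_of_nonneg (hp₂ i)] using hp i
      _ ≤ D ^ (1 - θ) * D ^ θ := rpow_one_sub_mul_rpow_le_of_le hθ0.le hθ1.le
          (dualNR_nonneg _ _) (dualNR_nonneg _ _) hg hk
      _ = D := rpow_one_sub_mul_rpow_self hD0 θ
  have hBconv : Convex ℝ B := (h₀.dualNR.convex_le D).prod (h₁.dualNR.convex_le D)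
  have hBcpt : IsCompact B := (h₀.dualNR.isCompact_le D).prod (h₁.dualNR.isCompact_le D)
  obtain ⟨f, u, v, hfB, huv, hfA⟩ := geometric_hahn_banach_compact_closed hBconv hBcpt
    (convex_dominatingPairs hθ0 hθ1 y) (isClosed_dominatingPairs hθ0.le hθ1.le y) hdisj
  obtain ⟨U, V, hf⟩ := f.exists_apply_eq_sum_mul_add_sum_mul
  have hfB' : D * (N₀ U + N₁ V) < u := by
    obtain ⟨g, hg, hgU⟩ := h₀.exists_dualNR_le_one_sum_mul_eq U
    obtain ⟨k, hk, hkV⟩ := h₁.exists_dualNR_le_one_sum_mul_eq V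
    have hmem : (D • g, D • k) ∈ B := by
      constructor <;> simp only [Set.mem_ofPred_eq, dualNR_smul, abs_of_nonneg hD0]
      exacts [mul_le_of_le_one_right hD0 hg, mul_le_of_le_one_right hD0 hk]
    simpa [hf, mul_assoc, ← mul_sum, hgU, hkV, mul_add] using hfB _ hmem
  -- `exists_mem_dominatingPairs_sum_le` needs positive weights: use `|U| + δ`, `|V| + δ`, `δ → 0`.
  have hfA' : ∀ δ > 0, v < D * (N₀ U + N₁ V) + δ * (D * (N₀ 1 + N₁ 1)) := by
    intro δ hδ
    obtain ⟨p, hpA, hp⟩ := exists_mem_dominatingPairs_sum_le hθ0.le hθ1.le h₀ h₁ y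
      (U := fun i => |U i| + δ) (V := fun i => |V i| + δ) (fun i => by positivity)
      (fun i => by positivity)
    calc v < f p := hfA p hpA
      _ = ∑ i, p.1 i * U i + ∑ i, p.2 i * V i := hf p
      _ ≤ ∑ i, p.1 i * (|U i| + δ) + ∑ i, p.2 i * (|V i| + δ) := by
          have hle (w : Fin n → ℝ) (i : Fin n) : w i ≤ |w i| + δ :=
            (le_abs_self _).trans (le_add_of_nonneg_right hδ.le)
          exact add_le_add
            (sum_le_sum fun i _ => mul_le_mul_of_nonneg_left (hle U i) (hpA.1 i))
            (sum_le_sum fun i _ => mul_le_mul_of_nonneg_left (hle V i) (hpA.2.1 i))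
      _ ≤ D * (N₀ (fun i => |U i| + δ) + N₁ (fun i => |V i| + δ)) := hp
      _ ≤ D * ((N₀ U + δ * N₀ 1) + (N₁ V + δ * N₁ 1)) := by
          gcongr
          exacts [h₀.apply_abs_add_le U hδ.le, h₁.apply_abs_add_le V hδ.le]
      _ = D * (N₀ U + N₁ V) + δ * (D * (N₀ 1 + N₁ 1)) := by ring
  have hlim : Filter.Tendsto (fun δ => D * (N₀ U + N₁ V) + δ * (D * (N₀ 1 + N₁ 1)))
      (nhdsWithin 0 (Set.Ioi 0)) (nhds (D * (N₀ U + N₁ V))) := by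
    simpa using (tendsto_nhdsWithin_of_tendsto_nhds
      ((Filter.tendsto_id (x := nhds (0 : ℝ))).mul_const _)).const_add (D * (N₀ U + N₁ V))
  have := ge_of_tendsto hlim (eventually_nhdsWithin_of_forall fun δ hδ => (hfA' δ hδ).le)
  linarith

end Duality

/-- `(X₀^{1-θ}X₁^θ)' = (X₀')^{1-θ}(X₁')^θ` isometrically. -/
theorem statement3 {n : ℕ} (θ : ℝ) (hθ : 0 < θ) (hθ1 : θ < 1)
    (N₀ N₁ : (Fin n → ℝ) → ℝ) (h₀ : IsLatticeNorm N₀) (h₁ : IsLatticeNorm N₁)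
    (y : Fin n → ℝ) :
    dualNR (calNorm θ N₀ N₁) y = calNorm θ (dualNR N₀) (dualNR N₁) y :=
  le_antisymm (dualNR_calNorm_le hθ hθ1 h₀ h₁ y) (calNorm_dualNR_le hθ hθ1 h₀ h₁ y)

end Paper
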